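/- Under the mirror symmetry condition (∂_l Q₀)(0) = 0 of the finite-mode covariance Q₀, for all indices l, m, n ∈ {1,2,3}, every f ∈ L²(𝕋³_ε) and g ∈ H¹(𝕋³_ε), one has ∑_{k,j} ⟨(∂_l g) σ_{k,j}^l, f ∂_m σ_{−k,j}^n⟩ = 0, where σ_{k,j}(x) = θ_{k,j} a_{k,j} e^{ik·x} and σ_{k,j}^l denotes its l-th component. -/

import Mathlib

open MeasureTheory Real

def box (ε : ℝ) : Set (Fin 3 → ℝ) :=
  Set.univ.pi fun i => Set.Icc 0 (![2 * π, 2 * π, 2 * π * ε] i)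

noncomputable def pd (i : Fin 3) (f : (Fin 3 → ℝ) → ℝ) (x : Fin 3 → ℝ) : ℝ :=
  fderiv ℝ f x (Pi.single i 1)

/-- Under the mirror-symmetry condition `(∂_m Q₀)(0) = 0` of the finite-mode covariance,
for all indices `l, m, n`, every `f ∈ L²(𝕋³_ε)` and `g ∈ H¹(𝕋³_ε)`:
`∑_{k,j} ⟨(∂_l g) σ_{k,j}^l , f ∂_m σ_{−k,j}^n⟩_{L²(𝕋³_ε)} = 0`, where
`σ_{k,j}(x) = θ_{k,j} a_{k,j} e^{ik·x}` (so that
`∂_m σ_{−k,j}^n(x) = θ_{−k,j} (a_{−k,j})_n · i(−k_m) e^{−ik·x}`). -/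
theorem stmt_14 (ε : ℝ) (hε : 0 < ε)
    (S : Finset ((Fin 3 → ℝ) × Fin 2))
    (θ : (Fin 3 → ℝ) → Fin 2 → ℂ) (a : (Fin 3 → ℝ) → Fin 2 → Fin 3 → ℝ)
    (hS : ∀ p ∈ S, (-p.1, p.2) ∈ S)
    (hθ : ∀ k j, θ (-k) j = starRingEnd ℂ (θ k j))
    (ha : ∀ k j, a (-k) j = a k j)
    (hmirror : ∀ l m n : Fin 3,
      (∑ p ∈ S, ‖θ p.1 p.2‖ ^ 2 * p.1 m * a p.1 p.2 l * a p.1 p.2 n) = 0)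
    (l m n : Fin 3) (f g : (Fin 3 → ℝ) → ℝ)
    (hf : MemLp f 2 (volume.restrict (box ε))) (hg : Differentiable ℝ g) :
    (∑ p ∈ S,
      ∫ x in box ε,
        (((pd l g x : ℝ) : ℂ) *
            (θ p.1 p.2 * ((a p.1 p.2 l : ℝ) : ℂ) *
              Complex.exp (Complex.I * ((∑ i : Fin 3, p.1 i * x i : ℝ) : ℂ)))) *
          (((f x : ℝ) : ℂ) *
            (θ (-p.1) p.2 * ((a (-p.1) p.2 n : ℝ) : ℂ) *
              (Complex.I * ((-(p.1 m) : ℝ) : ℂ)) *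
              Complex.exp (Complex.I * ((∑ i : Fin 3, (-(p.1 i)) * x i : ℝ) : ℂ))))) = 0 := by
  have step : ∀ p ∈ S,
      (∫ x in box ε,
        (((pd l g x : ℝ) : ℂ) *
            (θ p.1 p.2 * ((a p.1 p.2 l : ℝ) : ℂ) *
              Complex.exp (Complex.I * ((∑ i : Fin 3, p.1 i * x i : ℝ) : ℂ)))) *
          (((f x : ℝ) : ℂ) *
            (θ (-p.1) p.2 * ((a (-p.1) p.2 n : ℝ) : ℂ) *
              (Complex.I * ((-(p.1 m) : ℝ) : ℂ)) *
              Complex.exp (Complex.I * ((∑ i : Fin 3, (-(p.1 i)) * x i : ℝ) : ℂ)))))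
      = ((‖θ p.1 p.2‖ ^ 2 * p.1 m * a p.1 p.2 l * a p.1 p.2 n : ℝ) : ℂ)
          * (-Complex.I) * ∫ x in box ε, ((pd l g x * f x : ℝ) : ℂ) := by
    intro p _
    rw [mul_assoc, ← MeasureTheory.integral_const_mul]
    apply MeasureTheory.integral_congr_ae
    filter_upwards with x
    rw [hθ, ha]
    have hs : ((∑ i : Fin 3, (-(p.1 i)) * x i : ℝ) : ℂ)
        = -((∑ i : Fin 3, p.1 i * x i : ℝ) : ℂ) := by
      push_cast; rw [← Finset.sum_neg_distrib]; ring_nf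
    rw [hs]
    set s : ℂ := ((∑ i : Fin 3, p.1 i * x i : ℝ) : ℂ) with hs'
    have hE : Complex.exp (Complex.I * s) * Complex.exp (Complex.I * -s) = 1 := by
      rw [← Complex.exp_add]
      ring_nf
      exact Complex.exp_zero
    have hθθ : θ p.1 p.2 * (starRingEnd ℂ) (θ p.1 p.2)
        = ((‖θ p.1 p.2‖ ^ 2 : ℝ) : ℂ) := by
      rw [Complex.mul_conj]; norm_cast; exact (Complex.sq_norm _).symm
    calc (((pd l g x : ℝ) : ℂ) *
            (θ p.1 p.2 * ((a p.1 p.2 l : ℝ) : ℂ) * Complex.exp (Complex.I * s))) *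
          (((f x : ℝ) : ℂ) *
            ((starRingEnd ℂ) (θ p.1 p.2) * (((a p.1 p.2 n : ℝ) : ℂ) *
              (Complex.I * ((-(p.1 m) : ℝ) : ℂ))) * Complex.exp (Complex.I * -s)))
        = (θ p.1 p.2 * (starRingEnd ℂ) (θ p.1 p.2)) *
            (Complex.exp (Complex.I * s) * Complex.exp (Complex.I * -s)) *
            (((pd l g x : ℝ) : ℂ) * ((f x : ℝ) : ℂ) * ((a p.1 p.2 l : ℝ) : ℂ) *
              ((a p.1 p.2 n : ℝ) : ℂ) * (Complex.I * ((-(p.1 m) : ℝ) : ℂ))) := by ring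
      _ = ((‖θ p.1 p.2‖ ^ 2 * p.1 m * a p.1 p.2 l * a p.1 p.2 n : ℝ) : ℂ)
            * -Complex.I * ((pd l g x * f x : ℝ) : ℂ) := by
          rw [hθθ, hE]; push_cast; ring
  rw [Finset.sum_congr rfl step, ← Finset.sum_mul, ← Finset.sum_mul]
  have : (∑ p ∈ S,
      ((‖θ p.1 p.2‖ ^ 2 * p.1 m * a p.1 p.2 l * a p.1 p.2 n : ℝ) : ℂ)) = 0 := by
    norm_cast
    exact_mod_cast hmirror l m n
  rw [this, zero_mul, zero_mul]
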